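/- arXiv:1907.04425 — 5 statements merged into one kernel-verified Lean document; each statement's English description precedes it below -/
import Mathlib

section
/- Let c > 0 and 0 < R ≤ 1. Let M : (0,R] → ℝ be nonnegative and locally Lipschitz, and suppose that for almost every r ∈ (0,R] the derivative M'(r) exists and satisfies M'(r) ≥ (2/r)·((1 − c·r)·M(r) − c·r³). Then the function r ↦ e^{2cr}·M(r)/r² + e^{2cr} is nondecreasing on (0,R]. -/
open MeasureTheory Set Filter Topology


private lemma slope_tendsto_seq {g : ℝ → ℝ} {d x : ℝ} (h : HasDerivAt g d x) :
    Tendsto (fun n : ℕ => (g (x + 1 / ((n : ℝ) + 1)) - g x) * ((n : ℝ) + 1)) atTop (𝓝 d) := by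
  have hs := hasDerivAt_iff_tendsto_slope.mp h
  have hu : Tendsto (fun n : ℕ => x + 1 / ((n : ℝ) + 1)) atTop (𝓝[≠] x) := by
    apply tendsto_nhdsWithin_of_tendsto_nhds_of_eventually_within
    · have := (tendsto_one_div_add_atTop_nhds_zero_nat).const_add x
      simpa using this
    · filter_upwards with n
      have h1 : (0 : ℝ) < 1 / ((n : ℝ) + 1) := by positivity
      simp only [mem_compl_iff, mem_singleton_iff]
      intro hcon
      nlinarith [hcon]
  have hcomp := hs.comp hu
  refine hcomp.congr fun n => ?_
  have h1 : (0 : ℝ) < 1 / ((n : ℝ) + 1) := by positivity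
  simp only [Function.comp, slope_def_field]
  rw [div_eq_iff (by nlinarith : x + 1 / ((n : ℝ) + 1) - x ≠ 0)]
  field_simp
  ring

private lemma core_le {g : ℝ → ℝ} {K : NNReal} (hg : LipschitzWith K g) {a b : ℝ} (hab : a ≤ b)
    (hder : ∀ᵐ x ∂(volume.restrict (Set.Ioo a b)), ∃ d, 0 ≤ d ∧ HasDerivAt g d x) :
    g a ≤ g b := by
  set μ := volume.restrict (Set.Ioo a b) with hμ
  set q : ℕ → ℝ → ℝ := fun n x => (g (x + 1 / ((n : ℝ) + 1)) - g x) * ((n : ℝ) + 1) with hq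
  have hgc : Continuous g := hg.continuous
  have hmeas : ∀ n, AEStronglyMeasurable (q n) μ := by
    intro n
    exact (((hgc.comp (continuous_add_right _)).sub hgc).mul continuous_const).aestronglyMeasurable
  have hbound : ∀ n, ∀ᵐ x ∂μ, ‖q n x‖ ≤ (K : ℝ) := by
    intro n
    refine ae_of_all _ fun x => ?_
    have h1 : (0 : ℝ) < 1 / ((n : ℝ) + 1) := by positivity
    have h2 : dist (g (x + 1 / ((n : ℝ) + 1))) (g x) ≤ (K : ℝ) * (1 / ((n : ℝ) + 1)) := by
      have := hg.dist_le_mul (x + 1 / ((n : ℝ) + 1)) x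
      simpa [Real.dist_eq, abs_of_pos h1, abs_of_pos (by positivity : (0:ℝ) < (n:ℝ)+1)] using this
    rw [Real.dist_eq] at h2
    have h3 : ‖q n x‖ = |g (x + 1 / ((n : ℝ) + 1)) - g x| * ((n : ℝ) + 1) := by
      rw [hq]; simp [abs_mul, abs_of_pos (by positivity : (0:ℝ) < (n : ℝ) + 1)]
    rw [h3]
    calc |g (x + 1 / ((n : ℝ) + 1)) - g x| * ((n : ℝ) + 1)
        ≤ ((K : ℝ) * (1 / ((n : ℝ) + 1))) * ((n : ℝ) + 1) := by
          apply mul_le_mul_of_nonneg_right h2 (by positivity)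
      _ = (K : ℝ) := by field_simp
  have hlim : ∀ᵐ x ∂μ, Tendsto (fun n => q n x) atTop (𝓝 (deriv g x)) := by
    filter_upwards [hder] with x hx
    obtain ⟨d, _, hdx⟩ := hx
    rw [hdx.deriv]
    exact slope_tendsto_seq hdx
  have hDCT := tendsto_integral_of_dominated_convergence (fun _ => (K : ℝ)) hmeas
    (integrable_const _) hbound hlim
  -- compute the integrals of q n
  have hInt : ∀ u v : ℝ, IntervalIntegrable g volume u v := fun u v =>
    hgc.intervalIntegrable u v
  set G : ℝ → ℝ := fun y => ∫ t in (0:ℝ)..y, g t with hG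
  have hGd : ∀ y : ℝ, HasDerivAt G (g y) y := fun y =>
    intervalIntegral.integral_hasDerivAt_right (hInt 0 y)
      (hgc.stronglyMeasurable.stronglyMeasurableAtFilter) hgc.continuousAt
  have hval : ∀ u v : ℝ, (∫ t in u..v, g t) = G v - G u := by
    intro u v
    rw [hG]
    rw [← intervalIntegral.integral_interval_sub_left (hInt 0 v) (hInt 0 u)]
  have hIq : ∀ n : ℕ, (∫ x, q n x ∂μ) =
      (G (b + 1 / ((n : ℝ) + 1)) - G b) * ((n : ℝ) + 1)
      - (G (a + 1 / ((n : ℝ) + 1)) - G a) * ((n : ℝ) + 1) := by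
    intro n
    set h : ℝ := 1 / ((n : ℝ) + 1) with hh
    have hq_int1 : IntervalIntegrable (fun x => g (x + h)) volume a b := by
      exact (hgc.comp (continuous_add_right h)).intervalIntegrable a b
    have e1 : (∫ x, q n x ∂μ) = ∫ x in a..b, q n x := by
      rw [hμ, intervalIntegral.integral_of_le hab, integral_Ioc_eq_integral_Ioo]
    rw [e1, hq]
    have e2 : (∫ x in a..b, (g (x + h) - g x) * ((n : ℝ) + 1))
        = ((∫ x in a..b, g (x + h)) - ∫ x in a..b, g x) * ((n : ℝ) + 1) := by
      rw [← intervalIntegral.integral_sub hq_int1 (hInt a b)]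
      rw [← intervalIntegral.integral_mul_const]
    rw [e2]
    have e3 : (∫ x in a..b, g (x + h)) = ∫ x in a+h..b+h, g x :=
      intervalIntegral.integral_comp_add_right (fun x => g x) h
    rw [e3, hval, hval]
    ring
  have h2 : Tendsto (fun n => ∫ x, q n x ∂μ) atTop (𝓝 (g b - g a)) := by
    have hb := slope_tendsto_seq (hGd b)
    have ha := slope_tendsto_seq (hGd a)
    have := hb.sub ha
    refine this.congr fun n => (hIq n).symm
  have huniq : g b - g a = ∫ x, deriv g x ∂μ := tendsto_nhds_unique h2 hDCT
  have hnn : 0 ≤ ∫ x, deriv g x ∂μ := by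
    apply integral_nonneg_of_ae
    filter_upwards [hder] with x hx
    obtain ⟨d, hd0, hdx⟩ := hx
    rw [hdx.deriv]; exact hd0
  linarith



private lemma mono_Icc' {f : ℝ → ℝ} {K : NNReal} {a b : ℝ}
    (hf : LipschitzOnWith K f (Set.Icc a b))
    (hder : ∀ᵐ x ∂(volume.restrict (Set.Ioo a b)), ∃ d, 0 ≤ d ∧ HasDerivAt f d x) :
    MonotoneOn f (Set.Icc a b) := by
  obtain ⟨g, hgl, hEq⟩ := hf.extend_real
  intro u hu v hv huv
  have key : g u ≤ g v := by
    apply core_le hgl huv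
    have hsub : Set.Ioo u v ⊆ Set.Ioo a b := Set.Ioo_subset_Ioo hu.1 hv.2
    have h1 := ae_restrict_of_ae_restrict_of_subset hsub hder
    have hmem := ae_restrict_mem (μ := volume) (measurableSet_Ioo (a := u) (b := v))
    filter_upwards [h1, hmem] with x hx hxm
    obtain ⟨d, hd0, hdx⟩ := hx
    have hxab : x ∈ Set.Ioo a b := hsub hxm
    refine ⟨d, hd0, hdx.congr_of_eventuallyEq ?_⟩
    have hnb : Set.Icc a b ∈ 𝓝 x := Icc_mem_nhds hxab.1 hxab.2
    exact eventually_of_mem hnb fun y hy => (hEq hy).symm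
  rw [hEq hu, hEq hv]; exact key

private lemma mono_glue' {f : ℝ → ℝ} {a m n b : ℝ} (hnm : n ≤ m)
    (h1 : MonotoneOn f (Set.Icc a m)) (h2 : MonotoneOn f (Set.Icc n b)) :
    MonotoneOn f (Set.Icc a b) := by
  intro u hu v hv huv
  rcases le_or_gt v m with h | h
  · exact h1 ⟨hu.1, huv.trans h⟩ ⟨hv.1, h⟩ huv
  rcases le_or_gt n u with h' | h'
  · exact h2 ⟨h', hu.2⟩ ⟨h'.trans huv, hv.2⟩ huv
  · have hum : u ≤ m := (h'.trans_le hnm).le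
    have e1 := h1 ⟨hu.1, hum⟩ ⟨hu.1.trans hum, le_refl m⟩ hum
    have e2 := h2 ⟨hnm, h.le.trans hv.2⟩ ⟨hnm.trans h.le, hv.2⟩ h.le
    exact e1.trans e2

private lemma exists_lip_of_deriv' {f f' : ℝ → ℝ} {s : Set ℝ} (hs : Convex ℝ s) {C : ℝ}
    (hf : ∀ x ∈ s, HasDerivWithinAt f (f' x) s x) (hb : ∀ x ∈ s, |f' x| ≤ C) :
    ∃ K : NNReal, LipschitzOnWith K f s := by
  refine ⟨C.toNNReal, LipschitzOnWith.of_dist_le_mul fun x hx y hy => ?_⟩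
  have := hs.norm_image_sub_le_of_norm_hasDerivWithin_le hf
    (fun z hz => (hb z hz).trans (Real.le_coe_toNNReal C)) hy hx
  simpa [Real.dist_eq, Real.norm_eq_abs] using this

private lemma exists_lip_mul' {f g : ℝ → ℝ} {s : Set ℝ}
    (hfb : ∃ A : ℝ, ∀ x ∈ s, |f x| ≤ A) (hgb : ∃ B : ℝ, ∀ x ∈ s, |g x| ≤ B)
    (hf : ∃ K : NNReal, LipschitzOnWith K f s) (hg : ∃ K : NNReal, LipschitzOnWith K g s) :
    ∃ K : NNReal, LipschitzOnWith K (fun x => f x * g x) s := by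
  obtain ⟨A, hA⟩ := hfb; obtain ⟨B, hB⟩ := hgb
  obtain ⟨Kf, hKf⟩ := hf; obtain ⟨Kg, hKg⟩ := hg
  refine ⟨(Kf * B.toNNReal + A.toNNReal * Kg), LipschitzOnWith.of_dist_le_mul
    fun x hx y hy => ?_⟩
  have hfd := hKf.dist_le_mul x hx y hy
  have hgd := hKg.dist_le_mul x hx y hy
  rw [Real.dist_eq] at hfd hgd ⊢
  rw [Real.dist_eq] at hfd hgd ⊢
  have hgx : |g x| ≤ (B.toNNReal : ℝ) := (hB x hx).trans (Real.le_coe_toNNReal B)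
  have hfy : |f y| ≤ (A.toNNReal : ℝ) := (hA y hy).trans (Real.le_coe_toNNReal A)
  have key : |f x * g x - f y * g y| ≤ |f x - f y| * |g x| + |f y| * |g x - g y| := by
    calc |f x * g x - f y * g y| = |(f x - f y) * g x + f y * (g x - g y)| := by ring_nf
      _ ≤ |(f x - f y) * g x| + |f y * (g x - g y)| := abs_add_le _ _
      _ = |f x - f y| * |g x| + |f y| * |g x - g y| := by rw [abs_mul, abs_mul]
  have hd : (0:ℝ) ≤ |x - y| := abs_nonneg _
  push_cast
  nlinarith [mul_le_mul hfd hgx (abs_nonneg _) (by positivity),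
    mul_le_mul hgd hfy (abs_nonneg _) (by positivity), abs_nonneg (f x - f y),
    abs_nonneg (g x - g y)]


/-- Monotonicity computation in the proof of the density lemma: if the nonnegative
locally Lipschitz function `M` satisfies, for a.e. `r ∈ (0,R]`,
`M'(r) ≥ (2/r) ((1 - c r) M r - c r³)`, then `r ↦ e^{2cr} M(r)/r² + e^{2cr}`
is nondecreasing on `(0,R]`. -/
theorem stmt_1 (c R : ℝ) (hc : 0 < c) (hR0 : 0 < R) (hR1 : R ≤ 1)
    (M : ℝ → ℝ) (hMnonneg : ∀ x ∈ Set.Ioc (0 : ℝ) R, 0 ≤ M x)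
    (hMlip : LocallyLipschitzOn (Set.Ioc (0 : ℝ) R) M)
    (hder : ∀ᵐ r ∂(volume.restrict (Set.Ioc (0 : ℝ) R)),
      ∃ d : ℝ, HasDerivAt M d r ∧ d ≥ (2 / r) * ((1 - c * r) * M r - c * r ^ 3)) :
    MonotoneOn (fun r => Real.exp (2 * c * r) * M r / r ^ 2 + Real.exp (2 * c * r))
      (Set.Ioc (0 : ℝ) R) := by
  set F : ℝ → ℝ := fun r => Real.exp (2 * c * r) * M r / r ^ 2 + Real.exp (2 * c * r) with hF
  -- Step 1: a.e. derivative of F is nonnegative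
  have hFder : ∀ᵐ r ∂(volume.restrict (Set.Ioc (0 : ℝ) R)),
      ∃ D, 0 ≤ D ∧ HasDerivAt F D r := by
    filter_upwards [hder, ae_restrict_mem measurableSet_Ioc] with r hr hrm
    obtain ⟨d, hd, hge⟩ := hr
    have hr0 : (0 : ℝ) < r := hrm.1
    have hlin : HasDerivAt (fun t : ℝ => 2 * c * t) (2 * c) r := by
      simpa using (hasDerivAt_id r).const_mul (2 * c)
    have he : HasDerivAt (fun t : ℝ => Real.exp (2 * c * t))
        (Real.exp (2 * c * r) * (2 * c)) r := hlin.exp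
    have hnum : HasDerivAt (fun t : ℝ => Real.exp (2 * c * t) * M t)
        (Real.exp (2 * c * r) * (2 * c) * M r + Real.exp (2 * c * r) * d) r := he.mul hd
    have hpow : HasDerivAt (fun t : ℝ => t ^ 2) ((2 : ℕ) * r ^ (2 - 1)) r := hasDerivAt_pow 2 r
    have hr2 : r ^ 2 ≠ 0 := pow_ne_zero 2 hr0.ne'
    have hdiv := hnum.div hpow hr2
    have hFd := hdiv.add he
    refine ⟨_, ?_, hFd⟩
    -- nonnegativity of the derivative
    set e : ℝ := Real.exp (2 * c * r) with hee
    have he0 : (0 : ℝ) < e := Real.exp_pos _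
    have hd' : 2 * ((1 - c * r) * M r - c * r ^ 3) ≤ d * r := by
      have h0 := mul_le_mul_of_nonneg_right hge hr0.le
      have hXr : (2 / r) * ((1 - c * r) * M r - c * r ^ 3) * r
          = 2 * ((1 - c * r) * M r - c * r ^ 3) := by field_simp
      linarith [h0, hXr.ge, hXr.le]
    have h4 : (0 : ℝ) < (r ^ 2) ^ 2 := by positivity
    rw [div_add' _ _ _ h4.ne']
    apply div_nonneg _ h4.le
    have hd'' := mul_le_mul_of_nonneg_right hd' hr0.le
    have hd3 := mul_le_mul_of_nonneg_left hd'' he0.le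
    push_cast
    nlinarith [hd3, he0]
  -- Step 2: local monotonicity
  have hlocal : ∀ x ∈ Set.Ioc (0 : ℝ) R, ∃ δ > 0,
      MonotoneOn F (Set.Icc (x - δ) (min (x + δ) R)) := by
    intro x hx
    obtain ⟨K, t, ht, hKt⟩ := hMlip hx
    rw [Metric.mem_nhdsWithin_iff] at ht
    obtain ⟨ε, hε, hsub⟩ := ht
    refine ⟨min (ε / 2) (x / 2), lt_min (half_pos hε) (half_pos hx.1), ?_⟩
    set δ : ℝ := min (ε / 2) (x / 2) with hδdef
    have hδ0 : 0 < δ := lt_min (half_pos hε) (half_pos hx.1)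
    have hδε : δ ≤ ε / 2 := min_le_left _ _
    have hδx : δ ≤ x / 2 := min_le_right _ _
    set p : ℝ := x - δ with hpdef
    set q : ℝ := min (x + δ) R with hqdef
    have hp0 : 0 < p := by
      have : δ < x := lt_of_le_of_lt hδx (by linarith [hx.1])
      simp only [hpdef]; linarith
    have hpq : p ≤ q := by
      refine le_min (by linarith) ?_
      have := hx.2; simp only [hpdef]; linarith
    set J : Set ℝ := Set.Icc p q with hJdef
    have hJs : J ⊆ Metric.ball x ε ∩ Set.Ioc 0 R := by
      intro y hy
      constructor
      · rw [Metric.mem_ball, Real.dist_eq, abs_sub_lt_iff]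
        have h1 : y ≤ q := hy.2
        have h2 : q ≤ x + δ := min_le_left _ _
        have h3 : p ≤ y := hy.1
        constructor <;> [skip; skip] <;> simp only [hpdef] at h3 <;> nlinarith [hε]
      · exact ⟨lt_of_lt_of_le hp0 hy.1, hy.2.trans (min_le_right _ _)⟩
    have hMJ : LipschitzOnWith K M J := hKt.mono (hJs.trans hsub)
    -- bounds on J via compactness
    have bnd : ∀ f : ℝ → ℝ, ContinuousOn f J → ∃ A : ℝ, ∀ y ∈ J, |f y| ≤ A := by
      intro f hf
      obtain ⟨C, hC⟩ := isCompact_Icc.exists_bound_of_continuousOn hf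
      exact ⟨C, fun y hy => by simpa [Real.norm_eq_abs] using hC y hy⟩
    have hexpc : ContinuousOn (fun r : ℝ => Real.exp (2 * c * r)) J :=
      (Real.continuous_exp.comp (continuous_const.mul continuous_id)).continuousOn
    have hMc : ContinuousOn M J := hMJ.continuousOn
    have hinvc : ContinuousOn (fun r : ℝ => (r ^ 2)⁻¹) J := by
      apply ContinuousOn.inv₀ (by fun_prop)
      intro y hy
      exact pow_ne_zero 2 (lt_of_lt_of_le hp0 hy.1).ne'
    -- Lipschitz of components
    have hexpl : ∃ K : NNReal, LipschitzOnWith K (fun r : ℝ => Real.exp (2 * c * r)) J := by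
      apply exists_lip_of_deriv' (convex_Icc p q)
        (f' := fun r => Real.exp (2 * c * r) * (2 * c)) (C := Real.exp (2 * c * q) * (2 * c))
      · intro y hy
        have hlin : HasDerivAt (fun t : ℝ => 2 * c * t) (2 * c) y := by
          simpa using (hasDerivAt_id y).const_mul (2 * c)
        exact hlin.exp.hasDerivWithinAt
      · intro y hy
        have h1 : (0 : ℝ) < 2 * c := by linarith
        rw [abs_of_nonneg (by positivity)]
        have : Real.exp (2 * c * y) ≤ Real.exp (2 * c * q) :=
          Real.exp_le_exp.mpr (by nlinarith [hy.2])
        nlinarith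
    have hinvl : ∃ K : NNReal, LipschitzOnWith K (fun r : ℝ => (r ^ 2)⁻¹) J := by
      apply exists_lip_of_deriv' (convex_Icc p q)
        (f' := fun r => -(((2 : ℕ) : ℝ) * r ^ (2 - 1)) / ((r ^ 2) ^ 2)) (C := 2 / p ^ 3)
      · intro y hy
        have hy0 : 0 < y := lt_of_lt_of_le hp0 hy.1
        exact ((hasDerivAt_pow 2 y).inv (pow_ne_zero 2 hy0.ne')).hasDerivWithinAt
      · intro y hy
        have hy0 : 0 < y := lt_of_lt_of_le hp0 hy.1
        have hyp : p ≤ y := hy.1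
        rw [abs_div, abs_neg]
        push_cast
        rw [abs_of_nonneg (by positivity : (0:ℝ) ≤ 2 * y ^ (2 - 1)),
          abs_of_nonneg (by positivity : (0:ℝ) ≤ (y ^ 2) ^ 2)]
        rw [div_le_div_iff₀ (by positivity) (by positivity)]
        norm_num
        nlinarith [pow_pos hp0 3, pow_pos hy0 3, sq_nonneg (y - p), sq_nonneg y,
          mul_pos hp0 hy0, pow_pos hy0 2, mul_le_mul_of_nonneg_left (pow_le_pow_left₀ hp0.le hyp 3) (le_of_lt (by positivity : (0:ℝ) < 2 * y))]
      -- |−2y / y⁴| ≤ 2/p³  ⟺ 2y p³ ≤ 2 y⁴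
    -- Lipschitz of F on J
    have hFlip : ∃ K : NNReal, LipschitzOnWith K F J := by
      have h1 : ∃ K : NNReal, LipschitzOnWith K
          (fun r : ℝ => Real.exp (2 * c * r) * M r) J :=
        exists_lip_mul' (bnd _ hexpc) (bnd _ hMc) hexpl ⟨K, hMJ⟩
      have h2 : ∃ K : NNReal, LipschitzOnWith K
          (fun r : ℝ => (Real.exp (2 * c * r) * M r) * (r ^ 2)⁻¹) J :=
        exists_lip_mul' (bnd _ (hexpc.mul hMc)) (bnd _ hinvc) h1 hinvl
      obtain ⟨K1, hK1⟩ := h2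
      obtain ⟨K2, hK2⟩ := hexpl
      refine ⟨K1 + K2, ?_⟩
      have heq : F = fun r : ℝ => (Real.exp (2 * c * r) * M r) * (r ^ 2)⁻¹
          + Real.exp (2 * c * r) := by
        funext r; simp only [hF, div_eq_mul_inv]
      rw [heq]
      exact hK1.add hK2
    obtain ⟨KF, hKF⟩ := hFlip
    apply mono_Icc' hKF
    have hsubJ : Set.Ioo p q ⊆ Set.Ioc (0 : ℝ) R := fun y hy =>
      ⟨lt_trans hp0 hy.1, hy.2.le.trans (min_le_right _ _)⟩
    exact ae_restrict_of_ae_restrict_of_subset hsubJ hFder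
  -- Step 3: globalize via sSup
  intro u hu v hv huv
  set T : Set ℝ := {y | y ∈ Set.Icc u v ∧ MonotoneOn F (Set.Icc u y)} with hT
  have huT : u ∈ T := by
    refine ⟨⟨le_refl u, huv⟩, ?_⟩
    intro a ha b hb hab
    have h1 : a = u := le_antisymm ha.2 ha.1
    have h2 : b = u := le_antisymm hb.2 hb.1
    rw [h1, h2]
  have hTbdd : BddAbove T := ⟨v, fun y hy => hy.1.2⟩
  have hTne : T.Nonempty := ⟨u, huT⟩
  set s : ℝ := sSup T with hs
  have hc1 : u ≤ s := le_csSup hTbdd huT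
  have hc2 : s ≤ v := csSup_le hTne fun y hy => hy.1.2
  have hsmem : s ∈ Set.Ioc (0 : ℝ) R := ⟨lt_of_lt_of_le hu.1 hc1, hc2.trans hv.2⟩
  obtain ⟨δ, hδ0, hmono⟩ := hlocal s hsmem
  obtain ⟨y, hyT, hy⟩ : ∃ y ∈ T, s - δ < y := exists_lt_of_lt_csSup hTne (by linarith)
  have hyle : y ≤ s := le_csSup hTbdd hyT
  set m : ℝ := min v (s + δ) with hm
  have hmono2 : MonotoneOn F (Set.Icc (s - δ) m) := by
    apply hmono.mono
    exact Set.Icc_subset_Icc (le_refl _)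
      (le_min (min_le_right _ _) ((min_le_left _ _).trans hv.2))
  have hmT : m ∈ T := by
    refine ⟨⟨le_min huv (by linarith), min_le_left _ _⟩, ?_⟩
    exact mono_glue' hy.le hyT.2 hmono2
  have hmle : m ≤ s := le_csSup hTbdd hmT
  have hsv : s = v := by
    by_contra hne
    have hlt : s < v := lt_of_le_of_ne hc2 hne
    have : s < m := lt_min hlt (by linarith)
    linarith
  have hvT : v ∈ T := by
    have : m = v := by rw [hm, hsv]; exact min_eq_left (by linarith)
    rwa [this] at hmT
  exact hvT.2 ⟨le_refl u, huv⟩ ⟨huv, le_refl v⟩ huv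
end

section
/- Let c > 0 and 0 < R ≤ 1. Let M : (0,R] → ℝ be nonnegative and locally Lipschitz, and suppose that for almost every r ∈ (0,R] the derivative M'(r) exists and satisfies M'(r) ≥ (2/r)·((1 − c·r)·M(r) − c·r³). Then there exists a finite nonnegative real number L such that M(r)/r² tends to L as r tends to 0 from the right. -/
/-!
The function `F(r) = e^{2cr} (M(r)/r² + 1)` is absolutely continuous on compact subintervals of
`(0, R]`, and where `M` is differentiable
`F'(r) = e^{2cr} r⁻³ (2c (r M(r) + r³) + r M'(r) - 2 M(r))`, which the differential inequality
makes nonnegative. By the fundamental theorem of calculus for absolutely continuous functions,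
`F` is monotone, and it is bounded below by `0`, so it has a limit at `0⁺`; since
`e^{2cr} → 1`, so does `M(r)/r² = F(r) e^{-2cr} - 1`.
-/

open MeasureTheory Filter Set Topology

theorem monotoneOn_of_ae_deriv_nonneg {f : ℝ → ℝ} {s : Set ℝ} (hs : s.OrdConnected)
    (hf : ∀ a ∈ s, ∀ b ∈ s, AbsolutelyContinuousOnInterval f a b)
    (hd : ∀ᵐ x ∂volume.restrict s, 0 ≤ deriv f x) : MonotoneOn f s := by
  intro a ha b hb hab
  have hd' : 0 ≤ᵐ[volume.restrict (Icc a b)] deriv f :=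
    ae_restrict_of_ae_restrict_of_subset (hs.out ha hb) hd
  have := intervalIntegral.integral_nonneg_of_ae_restrict hab hd'
  rw [(hf a ha b hb).integral_deriv_eq_sub] at this
  linarith

noncomputable def weightedDensity (c : ℝ) (M : ℝ → ℝ) (r : ℝ) : ℝ :=
  Real.exp (2 * c * r) * (M r / r ^ 2 + 1)

theorem absolutelyContinuousOnInterval_weightedDensity {M : ℝ → ℝ} {a b : ℝ}
    (hM : AbsolutelyContinuousOnInterval M a b) (ha : 0 < a) (hb : 0 < b) (c : ℝ) :
    AbsolutelyContinuousOnInterval (weightedDensity c M) a b := by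
  have hinv : ContDiffOn ℝ 1 (fun r : ℝ ↦ (r ^ 2)⁻¹) (uIcc a b) :=
    ContDiffOn.inv (by fun_prop) fun r hr ↦
      pow_ne_zero 2 (lt_of_lt_of_le (lt_min ha hb) hr.1).ne'
  have hexp : ContDiffOn ℝ 1 (fun r : ℝ ↦ Real.exp (2 * c * r)) (uIcc a b) := by fun_prop
  have hone : ContDiffOn ℝ 1 (fun _ : ℝ ↦ (1 : ℝ)) (uIcc a b) := contDiffOn_const
  unfold weightedDensity
  simp only [div_eq_mul_inv]
  exact hexp.absolutelyContinuousOnInterval.fun_mul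
    ((hM.fun_mul hinv.absolutelyContinuousOnInterval).add hone.absolutelyContinuousOnInterval)

theorem hasDerivAt_weightedDensity {M : ℝ → ℝ} {d r : ℝ} (hM : HasDerivAt M d r) (hr : r ≠ 0)
    (c : ℝ) :
    HasDerivAt (weightedDensity c M)
      (Real.exp (2 * c * r) * ((2 * c * (M r * r + r ^ 3) + d * r - 2 * M r) / r ^ 3)) r := by
  have hexp : HasDerivAt (fun r ↦ Real.exp (2 * c * r)) (Real.exp (2 * c * r) * (2 * c)) r := by
    simpa using ((hasDerivAt_id r).const_mul (2 * c)).exp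
  have hquot :
      HasDerivAt (fun r ↦ M r / r ^ 2) ((d * r ^ 2 - M r * (2 * r)) / (r ^ 2) ^ 2) r := by
    simpa using hM.fun_div (hasDerivAt_pow 2 r) (pow_ne_zero 2 hr)
  unfold weightedDensity
  refine (hexp.mul (hquot.add_const 1)).congr_deriv ?_
  field_simp
  ring

theorem deriv_weightedDensity_nonneg {c : ℝ} {M : ℝ → ℝ} {d r : ℝ} (hM : HasDerivAt M d r)
    (hr : 0 < r) (hd : d ≥ (2 / r) * ((1 - c * r) * M r - c * r ^ 3)) :
    0 ≤ deriv (weightedDensity c M) r := by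
  rw [(hasDerivAt_weightedDensity hM hr.ne' c).deriv]
  have hdr : 2 * ((1 - c * r) * M r - c * r ^ 3) ≤ d * r := by
    rwa [ge_iff_le, div_mul_eq_mul_div, div_le_iff₀ hr] at hd
  have : 0 ≤ 2 * c * (M r * r + r ^ 3) + d * r - 2 * M r := by linarith
  positivity

theorem tendsto_div_sq_of_tendsto_weightedDensity {c : ℝ} {M : ℝ → ℝ} {L : ℝ}
    (h : Tendsto (weightedDensity c M) (𝓝[>] 0) (𝓝 L)) :
    Tendsto (fun r ↦ M r / r ^ 2) (𝓝[>] 0) (𝓝 (L - 1)) := by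
  have hexp : Tendsto (fun r : ℝ ↦ Real.exp (-(2 * c * r))) (𝓝[>] 0) (𝓝 1) := by
    simpa using ((Continuous.tendsto (by fun_prop) 0).mono_left nhdsWithin_le_nhds :
      Tendsto (fun r : ℝ ↦ Real.exp (-(2 * c * r))) (𝓝[>] 0) (𝓝 (Real.exp (-(2 * c * 0)))))
  convert (h.mul hexp).sub_const 1 using 2 with r
  · simp only [weightedDensity, Real.exp_neg]
    field_simp
    ring
  · ring

theorem stmt_2_general (c R : ℝ) (hR0 : 0 < R)
    (M : ℝ → ℝ) (hMnonneg : ∀ x ∈ Set.Ioc (0 : ℝ) R, 0 ≤ M x)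
    (hMlip : LocallyLipschitzOn (Set.Ioc (0 : ℝ) R) M)
    (hder : ∀ᵐ r ∂(volume.restrict (Set.Ioc (0 : ℝ) R)),
      ∃ d : ℝ, HasDerivAt M d r ∧ d ≥ (2 / r) * ((1 - c * r) * M r - c * r ^ 3)) :
    ∃ L : ℝ, 0 ≤ L ∧
      Tendsto (fun r => M r / r ^ 2) (nhdsWithin 0 (Set.Ioi (0 : ℝ))) (nhds L) := by
  have hmono : MonotoneOn (weightedDensity c M) (Ioc 0 R) := by
    refine monotoneOn_of_ae_deriv_nonneg ordConnected_Ioc (fun a ha b hb ↦ ?_) ?_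
    · obtain ⟨K, hK⟩ := (hMlip.mono (ordConnected_Ioc.uIcc_subset ha hb))
        |>.exists_lipschitzOnWith_of_compact isCompact_uIcc
      exact absolutelyContinuousOnInterval_weightedDensity hK.absolutelyContinuousOnInterval
        ha.1 hb.1 c
    · filter_upwards [hder, ae_restrict_mem measurableSet_Ioc] with r ⟨d, hd, hineq⟩ hr
      exact deriv_weightedDensity_nonneg hd hr.1 hineq
  have hbdd : BddBelow (weightedDensity c M '' Ioo 0 R) := by
    refine ⟨0, ?_⟩
    rintro _ ⟨r, hr, rfl⟩
    have := hMnonneg r (Ioo_subset_Ioc_self hr)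
    unfold weightedDensity
    positivity
  have hlim := tendsto_div_sq_of_tendsto_weightedDensity <|
    (hmono.mono Ioo_subset_Ioc_self).tendsto_nhdsWithin_Ioo_right (nonempty_Ioo.2 hR0) hbdd
  refine ⟨_, ge_of_tendsto hlim ?_, hlim⟩
  filter_upwards [Ioc_mem_nhdsGT hR0] with r hr
  exact div_nonneg (hMnonneg r hr) (by positivity)

/-- Conclusion of the density lemma: under the differential inequality
`M'(r) ≥ (2/r) ((1 - c r) M r - c r³)` a.e., the density ratio `M(r)/r²`
has a finite nonnegative limit as `r → 0⁺`. -/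
theorem stmt_2 (c R : ℝ) (hc : 0 < c) (hR0 : 0 < R) (hR1 : R ≤ 1)
    (M : ℝ → ℝ) (hMnonneg : ∀ x ∈ Set.Ioc (0 : ℝ) R, 0 ≤ M x)
    (hMlip : LocallyLipschitzOn (Set.Ioc (0 : ℝ) R) M)
    (hder : ∀ᵐ r ∂(volume.restrict (Set.Ioc (0 : ℝ) R)),
      ∃ d : ℝ, HasDerivAt M d r ∧ d ≥ (2 / r) * ((1 - c * r) * M r - c * r ^ 3)) :
    ∃ L : ℝ, 0 ≤ L ∧
      Tendsto (fun r => M r / r ^ 2) (nhdsWithin 0 (Set.Ioi (0 : ℝ))) (nhds L) :=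
  stmt_2_general c R hR0 M hMnonneg hMlip hder
end

section
/- Let u : ℝ² → ℝ be twice continuously differentiable on a neighborhood of the origin with ∂ₓu(0,0) = ∂ᵧu(0,0) = 0. Let h : ℝ → ℝ be differentiable on a neighborhood of 0 with h(0) = 0 and h'(0) = 0. Let η₁, η₂ : ℝ² → ℝ be functions such that the maps x ↦ η₁(x, h(x)) and x ↦ η₂(x, h(x)) are differentiable at x = 0, with η₁(0,0) = 0 and η₂(0,0) = 1. Suppose that for all x in a neighborhood of 0 one has η₁(x,h(x))·∂ₓu(x,h(x)) + η₂(x,h(x))·∂ᵧu(x,h(x)) = u(x,h(x)). Then the mixed second partial derivative satisfies ∂ₓ∂ᵧu(0,0) = 0. -/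
/-!
Differentiate the identity `η₁ u_x + η₂ u_y = u` along the curve `γ(x) = (x, h x)` at `0`.
Since `γ'(0) = (1, 0)`, the derivative of a partial `u_v ∘ γ` at `0` is `∂ₓ u_v (0,0)`, so the
product rule gives `η₁' u_x + η₁ ∂ₓu_x + η₂' u_y + η₂ ∂ₓu_y` on the left, which at the origin
(where `u_x = u_y = η₁ = 0` and `η₂ = 1`) is `∂ₓu_y(0,0)`; the right side has derivative
`u_x(0,0) = 0`.
-/

open Filter Topology

section

variable {𝕜 : Type*} [NontriviallyNormedField 𝕜]

theorem HasFDerivAt.comp_hasDerivAt_graph {F : Type*} [NormedAddCommGroup F] [NormedSpace 𝕜 F]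
    {f : 𝕜 × 𝕜 → F} {f' : 𝕜 × 𝕜 →L[𝕜] F} {h : 𝕜 → 𝕜} {x₀ y₀ h' : 𝕜}
    (hf : HasFDerivAt f f' (x₀, y₀)) (hh : HasDerivAt h h' x₀) (hh₀ : h x₀ = y₀) :
    HasDerivAt (fun x => f (x, h x)) (f' (1, h')) x₀ := by
  subst hh₀
  exact hf.comp_hasDerivAt x₀ ((hasDerivAt_id x₀).prodMk hh)

theorem HasDerivAt.eq_of_mul_add_mul_eventuallyEq {a b P Q U : 𝕜 → 𝕜} {a' b' P' Q' U' x₀ : 𝕜}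
    (ha : HasDerivAt a a' x₀) (hb : HasDerivAt b b' x₀) (hP : HasDerivAt P P' x₀)
    (hQ : HasDerivAt Q Q' x₀) (hU : HasDerivAt U U' x₀)
    (hsum : ∀ᶠ x in 𝓝 x₀, a x * P x + b x * Q x = U x)
    (ha₀ : a x₀ = 0) (hb₀ : b x₀ = 1) (hP₀ : P x₀ = 0) (hQ₀ : Q x₀ = 0) : Q' = U' := by
  have hU' := ((ha.mul hP).add (hb.mul hQ)).congr_of_eventuallyEq
    (hsum.mono fun _ hx => hx.symm)
  rw [← hU'.unique hU, ha₀, hb₀, hP₀, hQ₀]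
  ring

end

/-- Key calculus step in the maximum principle at a corner (Theorem A.1):
differentiating the orthogonality identity `η₁ u_x + η₂ u_y = u` along the curve
`x ↦ (x, h(x))` at the origin gives `u_{xy}(0,0) = 0`. -/
theorem stmt_3 (u : ℝ × ℝ → ℝ) (h : ℝ → ℝ) (η₁ η₂ : ℝ × ℝ → ℝ)
    (hu : ContDiffAt ℝ 2 u (0, 0))
    (hux : fderiv ℝ u (0, 0) (1, 0) = 0)
    (huy : fderiv ℝ u (0, 0) (0, 1) = 0)
    (hhdiff : ∀ᶠ x in nhds (0 : ℝ), DifferentiableAt ℝ h x)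
    (hh0 : h 0 = 0) (hh'0 : deriv h 0 = 0)
    (hη₁diff : DifferentiableAt ℝ (fun x => η₁ (x, h x)) 0)
    (hη₂diff : DifferentiableAt ℝ (fun x => η₂ (x, h x)) 0)
    (hη₁0 : η₁ (0, 0) = 0) (hη₂0 : η₂ (0, 0) = 1)
    (hid : ∀ᶠ x in nhds (0 : ℝ),
      η₁ (x, h x) * fderiv ℝ u (x, h x) (1, 0)
        + η₂ (x, h x) * fderiv ℝ u (x, h x) (0, 1) = u (x, h x)) :
    fderiv ℝ (fun p => fderiv ℝ u p (0, 1)) (0, 0) (1, 0) = 0 := by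
  have hh : HasDerivAt h 0 0 := by
    simpa only [hh'0] using hhdiff.self_of_nhds.hasDerivAt
  have hd2u : DifferentiableAt ℝ (fderiv ℝ u) (0, 0) :=
    (hu.fderiv_right le_rfl).differentiableAt one_ne_zero
  have hpartial (v : ℝ × ℝ) : HasDerivAt (fun x => fderiv ℝ u (x, h x) v)
      (fderiv ℝ (fun p => fderiv ℝ u p v) (0, 0) (1, 0)) 0 :=
    (hd2u.clm_apply (differentiableAt_const v)).hasFDerivAt.comp_hasDerivAt_graph hh hh0
  have hU : HasDerivAt (fun x => u (x, h x)) (fderiv ℝ u (0, 0) (1, 0)) 0 :=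
    (hu.differentiableAt two_ne_zero).hasFDerivAt.comp_hasDerivAt_graph hh hh0
  refine .trans ?_ hux
  refine hη₁diff.hasDerivAt.eq_of_mul_add_mul_eventuallyEq hη₂diff.hasDerivAt
    (hpartial (1, 0)) (hpartial (0, 1)) hU hid ?_ ?_ ?_ ?_ <;>
    simp only [hh0, hη₁0, hη₂0, hux, huy]
end

section
/- Let a, b, c be real numbers such that a·v₁² + 2b·v₁·v₂ + c·v₂² > 0 for every pair of real numbers (v₁, v₂) with v₁ > 0 and v₂ < 0, and such that a + c ≤ 0. Then a = 0, c = 0, and b < 0. -/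
/-- Pointwise Hessian analysis in the proof of the maximum principle at a corner:
if `a v₁² + 2b v₁ v₂ + c v₂² > 0` for all `v₁ > 0`, `v₂ < 0`, and `a + c ≤ 0`,
then `a = 0`, `c = 0` and `b < 0`. -/
theorem stmt_5 (a b c : ℝ)
    (hpos : ∀ v₁ v₂ : ℝ, 0 < v₁ → v₂ < 0 →
      a * v₁ ^ 2 + 2 * b * v₁ * v₂ + c * v₂ ^ 2 > 0)
    (htrace : a + c ≤ 0) :
    a = 0 ∧ c = 0 ∧ b < 0 := by
  have hb : -b ≤ |b| := neg_le_abs b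
  have hb' : b ≤ |b| := le_abs_self b
  have hc' : -c ≤ |c| := neg_le_abs c
  have hc'' : c ≤ |c| := le_abs_self c
  have ha' : -a ≤ |a| := neg_le_abs a
  have ha'' : a ≤ |a| := le_abs_self a
  -- a ≥ 0
  have hann : 0 ≤ a := by
    by_contra h
    push_neg at h
    set D : ℝ := 2 * (|b| + |c| + 1) - a with hD
    have hDpos : 0 < D := by nlinarith [abs_nonneg b, abs_nonneg c, abs_nonneg a]
    set ε : ℝ := -a / D with hε
    have hεpos : 0 < ε := div_pos (by linarith) hDpos
    have hεlt : ε < 1 := by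
      rw [hε, div_lt_one hDpos]
      nlinarith [abs_nonneg b, abs_nonneg c]
    have key := hpos 1 (-ε) one_pos (by linarith)
    have hεD : ε * D = -a := by
      rw [hε]; field_simp
    nlinarith [abs_nonneg b, abs_nonneg c, mul_pos hεpos hεpos,
      mul_le_mul_of_nonneg_left hεlt.le hεpos.le]
  have hcnn : 0 ≤ c := by
    by_contra h
    push_neg at h
    set D : ℝ := 2 * (|b| + |a| + 1) - c with hD
    have hDpos : 0 < D := by nlinarith [abs_nonneg b, abs_nonneg c, abs_nonneg a]
    set ε : ℝ := -c / D with hε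
    have hεpos : 0 < ε := div_pos (by linarith) hDpos
    have hεlt : ε < 1 := by
      rw [hε, div_lt_one hDpos]
      nlinarith [abs_nonneg b, abs_nonneg a]
    have key := hpos ε (-1) hεpos (by norm_num)
    have hεD : ε * D = -c := by
      rw [hε]; field_simp
    nlinarith [abs_nonneg b, abs_nonneg a, mul_pos hεpos hεpos,
      mul_le_mul_of_nonneg_left hεlt.le hεpos.le]
  have ha0 : a = 0 := by linarith
  have hc0 : c = 0 := by linarith
  refine ⟨ha0, hc0, ?_⟩
  have := hpos 1 (-1) one_pos (by norm_num)
  nlinarith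
end

section
/- Let Φ be a map from a neighborhood of the origin in ℝ³ to ℝ³ which is differentiable with Φ(0) = 0 and whose derivative DΦ is Lipschitz continuous on that neighborhood. Let ε > 0 and let γ : [0,ε) → ℝ³ be twice continuously differentiable with γ(0) = 0 and DΦ(0)(γ'(0)) = −γ'(0). Define β : (−ε,ε) → ℝ³ by β(t) = γ(t) for t ≥ 0 and β(t) = Φ(γ(−t)) for t < 0. Then there is a neighborhood of 0 on which β is differentiable and its derivative β' is Lipschitz continuous (i.e. β is of class C^{1,1} near 0). -/
/-!
Both halves of the doubled curve are `C^{1,1}` up to the corner: `γ` because it is `C²` on a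
compact interval, and `t ↦ Φ (γ (-t))` because its derivative `-DΦ(γ(-t)) γ'(-t)` is a product of
bounded Lipschitz factors. The orthogonality condition `DΦ(0) γ'(0) = -γ'(0)` says exactly that the
two one-sided derivatives agree at `0`, and one-sided derivatives and Lipschitz bounds on `[-δ, 0]`
and `[0, δ]` glue to the whole interval `[-δ, δ]`.
-/

open Set Filter Topology NNReal

theorem LipschitzOnWith.Icc_union_Icc {α : Type*} [PseudoMetricSpace α] {f : ℝ → α} {K : ℝ≥0}
    {a b c : ℝ} (hab : LipschitzOnWith K f (Icc a b)) (hbc : LipschitzOnWith K f (Icc b c)) :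
    LipschitzOnWith K f (Icc a c) := by
  rw [lipschitzOnWith_iff_dist_le_mul] at *
  have key : ∀ x ∈ Icc a c, ∀ y ∈ Icc a c, x ≤ y → dist (f x) (f y) ≤ K * dist x y := by
    intro x hx y hy hxy
    rcases le_total y b with hyb | hby
    · exact hab x ⟨hx.1, hxy.trans hyb⟩ y ⟨hx.1.trans hxy, hyb⟩
    rcases le_total b x with hbx | hxb
    · exact hbc x ⟨hbx, hxy.trans hy.2⟩ y ⟨hby, hy.2⟩
    calc dist (f x) (f y) ≤ dist (f x) (f b) + dist (f b) (f y) := dist_triangle _ _ _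
      _ ≤ K * dist x b + K * dist b y :=
          add_le_add (hab x ⟨hx.1, hxb⟩ b ⟨hx.1.trans hxb, le_rfl⟩)
            (hbc b ⟨le_rfl, hby.trans hy.2⟩ y ⟨hby, hy.2⟩)
      _ = K * dist x y := by
          simp only [Real.dist_eq, abs_of_nonpos (sub_nonpos.2 hxb),
            abs_of_nonpos (sub_nonpos.2 hby), abs_of_nonpos (sub_nonpos.2 hxy)]
          ring
  intro x hx y hy
  rcases le_total x y with hxy | hyx
  · exact key x hx y hy hxy
  · rw [dist_comm, dist_comm x]
    exact key y hy x hx hyx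

theorem IsCompact.exists_lipschitzOnWith_clm_apply {α E F : Type*} [PseudoMetricSpace α]
    [NormedAddCommGroup E] [NormedSpace ℝ E] [NormedAddCommGroup F] [NormedSpace ℝ F]
    {s : Set α} {A : α → E →L[ℝ] F} {v : α → E} {KA Kv : ℝ≥0} (hs : IsCompact s)
    (hA : LipschitzOnWith KA A s) (hv : LipschitzOnWith Kv v s) :
    ∃ K, LipschitzOnWith K (fun x ↦ A x (v x)) s := by
  obtain ⟨MA, hMA⟩ := hs.exists_bound_of_continuousOn hA.continuousOn
  obtain ⟨Mv, hMv⟩ := hs.exists_bound_of_continuousOn hv.continuousOn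
  refine ⟨Real.toNNReal (MA * Kv + KA * Mv), LipschitzOnWith.of_dist_le_mul fun x hx y hy ↦ ?_⟩
  have hMA0 : 0 ≤ MA := (norm_nonneg _).trans (hMA x hx)
  have hvxy : ‖v x - v y‖ ≤ Kv * dist x y := by
    rw [← dist_eq_norm]; exact hv.dist_le_mul x hx y hy
  have hAxy : ‖A x - A y‖ ≤ KA * dist x y := by
    rw [← dist_eq_norm]; exact hA.dist_le_mul x hx y hy
  rw [dist_eq_norm]
  calc ‖A x (v x) - A y (v y)‖ = ‖A x (v x - v y) + (A x - A y) (v y)‖ := by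
        simp only [map_sub, sub_apply, sub_add_sub_cancel]
    _ ≤ ‖A x‖ * ‖v x - v y‖ + ‖A x - A y‖ * ‖v y‖ :=
        norm_add_le_of_le ((A x).le_opNorm _) ((A x - A y).le_opNorm _)
    _ ≤ MA * (Kv * dist x y) + KA * dist x y * Mv := by
        gcongr
        exacts [hMA x hx, hMv y hy]
    _ = (MA * Kv + KA * Mv) * dist x y := by ring
    _ ≤ Real.toNNReal (MA * Kv + KA * Mv) * dist x y := by
        gcongr
        exact Real.le_coe_toNNReal _

section HasLipschitzDerivOn

variable {E F : Type*} [NormedAddCommGroup E] [NormedSpace ℝ E] [NormedAddCommGroup F]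
  [NormedSpace ℝ F] {f g f' g' : ℝ → E} {s : Set ℝ} {a b c : ℝ}

/-- `C^{1,1}` on `s`, with derivatives taken within `s` (one-sided at the ends of an interval). -/
def HasLipschitzDerivOn (f f' : ℝ → E) (s : Set ℝ) : Prop :=
  (∀ t ∈ s, HasDerivWithinAt f (f' t) s t) ∧ ∃ K, LipschitzOnWith K f' s

theorem HasLipschitzDerivOn.congr (hf : HasLipschitzDerivOn f f' s) (h : EqOn g f s)
    (h' : EqOn g' f' s) : HasLipschitzDerivOn g g' s := by
  obtain ⟨hderiv, K, hK⟩ := hf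
  refine ⟨fun t ht ↦ h' ht ▸ (hderiv t ht).congr h (h ht), K, fun x hx y hy ↦ ?_⟩
  rw [h' hx, h' hy]
  exact hK hx hy

theorem HasLipschitzDerivOn.Icc_union_Icc (hab : HasLipschitzDerivOn f f' (Icc a b))
    (hbc : HasLipschitzDerivOn f f' (Icc b c)) : HasLipschitzDerivOn f f' (Icc a c) := by
  obtain ⟨hderiv₁, K₁, hK₁⟩ := hab
  obtain ⟨hderiv₂, K₂, hK₂⟩ := hbc
  -- At a point outside a closed interval the derivative within it holds vacuously.
  have extend : ∀ {s : Set ℝ}, IsClosed s → (∀ t ∈ s, HasDerivWithinAt f (f' t) s t) →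
      ∀ t, HasDerivWithinAt f (f' t) s t := by
    intro s hs hderiv t
    by_cases ht : t ∈ s
    · exact hderiv t ht
    · exact HasFDerivWithinAt.of_notMem_closure (by rwa [hs.closure_eq])
  refine ⟨fun t _ ↦ ((extend isClosed_Icc hderiv₁ t).union (extend isClosed_Icc hderiv₂ t)).mono
    Icc_subset_Icc_union_Icc, max K₁ K₂, ?_⟩
  exact (hK₁.weaken (le_max_left _ _)).Icc_union_Icc (hK₂.weaken (le_max_right _ _))

theorem HasLipschitzDerivOn.comp_neg (hf : HasLipschitzDerivOn f f' (Icc a b)) :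
    HasLipschitzDerivOn (fun t ↦ f (-t)) (fun t ↦ -f' (-t)) (Icc (-b) (-a)) := by
  obtain ⟨hderiv, K, hK⟩ := hf
  have hmaps : MapsTo (fun t : ℝ ↦ -t) (Icc (-b) (-a)) (Icc a b) := fun u hu ↦
    ⟨le_neg.2 hu.2, neg_le.2 hu.1⟩
  refine ⟨fun t ht ↦ ?_, K, LipschitzOnWith.of_dist_le_mul fun x hx y hy ↦ ?_⟩
  · simpa [Function.comp_def] using (hderiv (-t) (hmaps ht)).scomp t (hasDerivAt_neg t).hasDerivWithinAt hmaps
  · rw [dist_neg_neg, ← dist_neg_neg x y]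
    exact hK.dist_le_mul (-x) (hmaps hx) (-y) (hmaps hy)

theorem ContDiffOn.hasLipschitzDerivOn {f : ℝ → E} (hf : ContDiffOn ℝ 2 f s) (hs : UniqueDiffOn ℝ s)
    (hab : Icc a b ⊆ s) : HasLipschitzDerivOn f (derivWithin f s) (Icc a b) :=
  ⟨fun t ht ↦ ((hf.differentiableOn two_ne_zero t (hab ht)).hasDerivWithinAt).mono hab,
    ((hf.derivWithin hs (m := 1) (by norm_num)).mono hab).exists_lipschitzOnWith one_ne_zero
      (convex_Icc a b) isCompact_Icc⟩

theorem HasLipschitzDerivOn.comp_of_lipschitzOnWith_fderiv {Φ : E → F} {U : Set E} {K : ℝ≥0}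
    (hΦ : ∀ y ∈ U, DifferentiableAt ℝ Φ y) (hΦ' : LipschitzOnWith K (fderiv ℝ Φ) U)
    (hfU : MapsTo f (Icc a b) U) (hf : HasLipschitzDerivOn f f' (Icc a b)) :
    HasLipschitzDerivOn (fun t ↦ Φ (f t)) (fun t ↦ fderiv ℝ Φ (f t) (f' t)) (Icc a b) := by
  obtain ⟨hderiv, Kf', hf'⟩ := hf
  refine ⟨fun t ht ↦ (hΦ _ (hfU ht)).hasFDerivAt.comp_hasDerivWithinAt t (hderiv t ht), ?_⟩
  obtain ⟨M, hM⟩ := isCompact_Icc.exists_bound_of_continuousOn hf'.continuousOn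
  have hfLip : LipschitzOnWith M.toNNReal f (Icc a b) :=
    (convex_Icc a b).lipschitzOnWith_of_nnnorm_hasDerivWithin_le hderiv fun t ht ↦ by
      rw [← NNReal.coe_le_coe, coe_nnnorm, Real.coe_toNNReal']
      exact le_max_of_le_left (hM t ht)
  exact isCompact_Icc.exists_lipschitzOnWith_clm_apply (hΦ'.comp hfLip hfU) hf'

end HasLipschitzDerivOn

/-- The doubled curve `γ ∪ Φ(γ)` obtained by reflecting a `C²` curve `γ` (meeting the
surface orthogonally, i.e. `DΦ(0)(γ'(0)) = -γ'(0)`) across a surface via a reflection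
map `Φ` with Lipschitz derivative is a `C^{1,1}` curve near the corner. -/
theorem stmt_7 (U : Set (EuclideanSpace ℝ (Fin 3))) (hU : U ∈ nhds (0 : EuclideanSpace ℝ (Fin 3)))
    (Φ : EuclideanSpace ℝ (Fin 3) → EuclideanSpace ℝ (Fin 3))
    (hΦdiff : ∀ y ∈ U, DifferentiableAt ℝ Φ y)
    (lam : NNReal) (hΦlip : LipschitzOnWith lam (fun y => fderiv ℝ Φ y) U)
    (hΦ0 : Φ 0 = 0)
    (ε : ℝ) (hε : 0 < ε)
    (γ : ℝ → EuclideanSpace ℝ (Fin 3))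
    (hγ : ContDiffOn ℝ 2 γ (Set.Ico 0 ε))
    (hγ0 : γ 0 = 0)
    (hrefl : fderiv ℝ Φ 0 (derivWithin γ (Set.Ico 0 ε) 0)
      = -derivWithin γ (Set.Ico 0 ε) 0)
    (β : ℝ → EuclideanSpace ℝ (Fin 3))
    (hβ : ∀ t, β t = if 0 ≤ t then γ t else Φ (γ (-t))) :
    ∃ δ > 0, ∃ β' : ℝ → EuclideanSpace ℝ (Fin 3), ∃ K : NNReal,
      (∀ t ∈ Set.Ioo (-δ) δ, HasDerivAt β (β' t) t) ∧
      LipschitzOnWith K β' (Set.Ioo (-δ) δ) := by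
  set g := derivWithin γ (Ico 0 ε)
  obtain ⟨δ, hδ, hδU⟩ : ∃ δ > 0, Icc 0 δ ⊆ γ ⁻¹' U ∩ Ico 0 ε := by
    have hγU : γ ⁻¹' U ∈ 𝓝[Ico 0 ε] 0 :=
      (hγ.continuousOn 0 ⟨le_rfl, hε⟩).preimage_mem_nhdsWithin (hγ0 ▸ hU)
    rw [nhdsWithin_Ico_eq_nhdsGE hε] at hγU
    exact mem_nhdsGE_iff_exists_Icc_subset.1 (inter_mem hγU (Ico_mem_nhdsGE hε))
  have hpos : HasLipschitzDerivOn γ g (Icc 0 δ) :=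
    hγ.hasLipschitzDerivOn (uniqueDiffOn_Ico 0 ε) fun t ht ↦ (hδU ht).2
  have hneg : HasLipschitzDerivOn (fun t ↦ Φ (γ (-t))) (fun t ↦ -fderiv ℝ Φ (γ (-t)) (g (-t)))
      (Icc (-δ) 0) := by
    simpa only [neg_zero] using
      (hpos.comp_of_lipschitzOnWith_fderiv hΦdiff hΦlip fun t ht ↦ (hδU ht).1).comp_neg
  set β' : ℝ → EuclideanSpace ℝ (Fin 3) :=
    fun t ↦ if 0 ≤ t then g t else -fderiv ℝ Φ (γ (-t)) (g (-t))
  have hβ'neg : EqOn β' (fun t ↦ -fderiv ℝ Φ (γ (-t)) (g (-t))) (Icc (-δ) 0) := by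
    intro t ht
    rcases ht.2.lt_or_eq with ht0 | rfl
    · simp [β', not_le.2 ht0]
    · simp [β', hγ0, hrefl]
  have hβneg : EqOn β (fun t ↦ Φ (γ (-t))) (Icc (-δ) 0) := by
    intro t ht
    rcases ht.2.lt_or_eq with ht0 | rfl
    · simp [hβ, not_le.2 ht0]
    · simp [hβ, hγ0, hΦ0]
  obtain ⟨hderiv, K, hK⟩ : HasLipschitzDerivOn β β' (Icc (-δ) δ) :=
    (hneg.congr hβneg hβ'neg).Icc_union_Icc
      (hpos.congr (fun t ht ↦ by simp [hβ, ht.1]) fun t ht ↦ by simp [β', ht.1])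
  exact ⟨δ, hδ, β', K, fun t ht ↦ (hderiv t (Ioo_subset_Icc_self ht)).hasDerivAt
    (Icc_mem_nhds ht.1 ht.2), hK.mono Ioo_subset_Icc_self⟩
end
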